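/- Fix m > 0, α > 0 and 0 < R_l < R_u. Let g be a random variable on (0, ∞) with Gamma density m^m·g^{m−1}·e^{−m·g}/Γ(m), and let r be an independent random variable on [R_l, R_u] with density 2r/(R_u² − R_l²). Then for every x > 0, P( g²·r^{−2α} < x ) = 1 − [ R_u²·Γ[m, m·R_u^{α}·√x] − R_l²·Γ[m, m·R_l^{α}·√x] + (m·√x)^{−2/α}·Γ[m + 2/α, m·R_l^{α}·√x, m·R_u^{α}·√x] ] / ( (R_u² − R_l²)·Γ(m) ). -/

import Mathlib

open MeasureTheory Set Real

/-- Upper incomplete gamma function `Γ[a, x₀] = ∫_{x₀}^{∞} t^{a−1} e^{−t} dt`. -/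
noncomputable def uGamma (a x₀ : ℝ) : ℝ := ∫ t in Set.Ioi x₀, t ^ (a - 1) * Real.exp (-t)

/-- Generalized incomplete gamma function `Γ[a, x₀, x₁] = ∫_{x₀}^{x₁} t^{a−1} e^{−t} dt`. -/
noncomputable def gGamma (a x₀ x₁ : ℝ) : ℝ := ∫ t in x₀..x₁, t ^ (a - 1) * Real.exp (-t)

lemma cond_iff (α x g r : ℝ) (hα : 0 < α) (hx : 0 < x) (hg : 0 < g) (hr : 0 < r) :
    g ^ 2 * r ^ (-(2 * α)) < x ↔ (g / Real.sqrt x) ^ α⁻¹ < r := by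
  have hs : 0 < Real.sqrt x := Real.sqrt_pos.2 hx
  rw [Real.rpow_neg hr.le, ← div_eq_mul_inv, div_lt_iff₀ (Real.rpow_pos_of_pos hr _)]
  have h2 : r ^ (2*α) = (r ^ α) ^ 2 := by
    rw [← Real.rpow_natCast (r ^ α) 2, ← Real.rpow_mul hr.le]
    norm_num [mul_comm]
  rw [h2, ← Real.sq_sqrt hx.le, ← mul_pow,
    pow_lt_pow_iff_left₀ hg.le (by positivity) (by norm_num : (2:ℕ) ≠ 0)]
  rw [Real.sqrt_sq hs.le,
    ← Real.rpow_lt_rpow_iff (x := (g / Real.sqrt x) ^ α⁻¹) (by positivity) hr.le hα,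
    Real.rpow_inv_rpow (by positivity) hα.ne', div_lt_iff₀ hs, mul_comm]

lemma inner_eval (α Rl Ru x K g : ℝ) (hα : 0 < α) (h0 : 0 < Rl) (hlu : Rl < Ru)
    (hx : 0 < x) (hg : 0 < g) :
    (∫ r in Rl..Ru, if g ^ 2 * r ^ (-(2 * α)) < x then K * (2 * r / (Ru ^ 2 - Rl ^ 2)) else 0)
      = K * (Ru ^ 2 - (max Rl (min ((g / Real.sqrt x) ^ α⁻¹) Ru)) ^ 2) / (Ru ^ 2 - Rl ^ 2) := by
  set r0 := (g / Real.sqrt x) ^ α⁻¹ with hr0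
  set c := max Rl (min r0 Ru) with hc
  have hc1 : Rl ≤ c := le_max_left _ _
  have hc2 : c ≤ Ru := max_le hlu.le (min_le_right _ _)
  rw [intervalIntegral.integral_of_le hlu.le]
  rw [setIntegral_congr_fun measurableSet_Ioc
    (g := (Set.Ioc c Ru).indicator (fun r => K * (2 * r / (Ru ^ 2 - Rl ^ 2)))) ?_]
  · rw [setIntegral_indicator measurableSet_Ioc, Set.Ioc_inter_Ioc,
      max_eq_right hc1, min_self, ← intervalIntegral.integral_of_le hc2]
    have e : (fun r : ℝ => K * (2 * r / (Ru ^ 2 - Rl ^ 2)))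
        = fun r => (2 * K / (Ru ^ 2 - Rl ^ 2)) * r := funext fun r => by ring
    rw [e, intervalIntegral.integral_const_mul, integral_id]
    ring
  · intro r hr
    dsimp only
    have hrpos : 0 < r := h0.trans hr.1
    simp only [cond_iff α x g r hα hx hg hrpos]
    by_cases h : r0 < r
    · rw [if_pos h, Set.indicator_of_mem
        (Set.mem_Ioc.2 ⟨max_lt hr.1 ((min_le_left _ _).trans_lt h), hr.2⟩) _]
    · rw [if_neg h, Set.indicator_of_notMem]
      rintro ⟨h1, -⟩
      rcases min_lt_iff.1 (lt_of_le_of_lt (le_max_right _ _) h1) with h2 | h2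
      · exact h h2
      · exact absurd hr.2 (not_le.2 h2)

lemma gammaKernel_int (c : ℝ) (hc : 0 < c) :
    IntegrableOn (fun t : ℝ => t ^ (c - 1) * Real.exp (-t)) (Set.Ioi 0) := by
  have := Real.GammaIntegral_convergent hc
  exact this.congr_fun (fun t ht => mul_comm _ _) measurableSet_Ioi

lemma base_int (mm c : ℝ) (hm : 0 < mm) (hc : 0 < c) :
    IntegrableOn (fun g : ℝ => g ^ (c - 1) * Real.exp (-(mm * g))) (Set.Ioi 0) := by
  have h1 : IntegrableOn (fun g : ℝ => (mm * g) ^ (c - 1) * Real.exp (-(mm * g)))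
      (Set.Ioi 0) := by
    have := (integrableOn_Ioi_comp_mul_left_iff
      (fun t : ℝ => t ^ (c - 1) * Real.exp (-t)) 0 hm).2
    simpa using this (by simpa using gammaKernel_int c hc)
  have h2 : IntegrableOn
      (fun g : ℝ => mm ^ (-(c - 1)) * ((mm * g) ^ (c - 1) * Real.exp (-(mm * g))))
      (Set.Ioi 0) := h1.const_mul _
  refine h2.congr_fun (fun g hg => ?_) measurableSet_Ioi
  have hg0 : (0:ℝ) < g := hg
  dsimp only
  rw [Real.mul_rpow hm.le hg0.le, ← mul_assoc, ← mul_assoc,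
    ← Real.rpow_add hm, neg_add_cancel, Real.rpow_zero, one_mul]

lemma uGamma_zero (c : ℝ) (hc : 0 < c) : uGamma c 0 = Real.Gamma c := by
  rw [Real.Gamma_eq_integral hc, uGamma]
  exact setIntegral_congr_fun measurableSet_Ioi fun t ht => mul_comm _ _

lemma uGamma_sub (c a b : ℝ) (hc : 0 < c) (ha : 0 ≤ a) (hab : a ≤ b) :
    uGamma c a - uGamma c b = ∫ t in a..b, t ^ (c - 1) * Real.exp (-t) := by
  have hint := gammaKernel_int c hc
  have h1 : IntegrableOn (fun t : ℝ => t ^ (c - 1) * Real.exp (-t)) (Set.Ioc a b) :=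
    hint.mono_set (fun t ht => lt_of_le_of_lt ha ht.1)
  have h2 : IntegrableOn (fun t : ℝ => t ^ (c - 1) * Real.exp (-t)) (Set.Ioi b) :=
    hint.mono_set (fun t ht => lt_of_le_of_lt (ha.trans hab) ht)
  have hsplit : uGamma c a = (∫ t in Set.Ioc a b, t ^ (c - 1) * Real.exp (-t)) + uGamma c b := by
    rw [uGamma, uGamma, ← setIntegral_union ?_ measurableSet_Ioi h1 h2,
      Set.Ioc_union_Ioi_eq_Ioi hab]
    exact Set.disjoint_left.2 fun t ht ht' => absurd ht.2 (not_le.2 ht')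
  rw [hsplit, intervalIntegral.integral_of_le hab]; ring

lemma subst_mul (mm c A B : ℝ) (hm : 0 < mm) (hA : 0 ≤ A) (hAB : A ≤ B) :
    (∫ g in A..B, g ^ (c - 1) * Real.exp (-(mm * g)))
      = mm ^ (-c) * ∫ t in (mm * A)..(mm * B), t ^ (c - 1) * Real.exp (-t) := by
  have h1 : (∫ g in A..B, (fun t : ℝ => t ^ (c - 1) * Real.exp (-t)) (mm * g))
      = mm⁻¹ • ∫ t in (mm * A)..(mm * B), t ^ (c - 1) * Real.exp (-t) :=
    intervalIntegral.integral_comp_mul_left (fun t : ℝ => t ^ (c - 1) * Real.exp (-t)) hm.ne'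
  have h2 : (∫ g in A..B, (fun t : ℝ => t ^ (c - 1) * Real.exp (-t)) (mm * g))
      = mm ^ (c - 1) * ∫ g in A..B, g ^ (c - 1) * Real.exp (-(mm * g)) := by
    rw [← intervalIntegral.integral_const_mul]
    apply intervalIntegral.integral_congr
    intro g hg
    rw [Set.uIcc_of_le hAB] at hg
    have hg0 : 0 ≤ g := hA.trans hg.1
    dsimp only
    rw [Real.mul_rpow hm.le hg0]
    ring
  have key : mm ^ (c - 1) * (∫ g in A..B, g ^ (c - 1) * Real.exp (-(mm * g)))
      = mm⁻¹ * ∫ t in (mm * A)..(mm * B), t ^ (c - 1) * Real.exp (-t) := by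
    rw [← h2, h1, smul_eq_mul]
  have e1 : mm ^ (-(c - 1)) * mm ^ (c - 1) = 1 := by
    rw [← Real.rpow_add hm, neg_add_cancel, Real.rpow_zero]
  have e2 : mm ^ (-(c - 1)) * mm⁻¹ = mm ^ (-c) := by
    rw [← Real.rpow_neg_one mm, ← Real.rpow_add hm]
    ring_nf
  calc (∫ g in A..B, g ^ (c - 1) * Real.exp (-(mm * g)))
      = mm ^ (-(c - 1)) * (mm ^ (c - 1) * ∫ g in A..B, g ^ (c - 1) * Real.exp (-(mm * g))) := by
        rw [← mul_assoc, e1, one_mul]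
    _ = mm ^ (-(c - 1)) * (mm⁻¹ * ∫ t in (mm * A)..(mm * B), t ^ (c - 1) * Real.exp (-t)) := by
        rw [key]
    _ = mm ^ (-c) * ∫ t in (mm * A)..(mm * B), t ^ (c - 1) * Real.exp (-t) := by
        rw [← mul_assoc, e2]


set_option maxHeartbeats 1000000 in
/-- CDF of the composite variable `g²·r^{−2α}` where `g` has Gamma
density `m^m g^{m−1} e^{−mg}/Γ(m)` on `(0,∞)` and `r` independently has density
`2r/(R_u² − R_l²)` on `[R_l, R_u]`. The probability is expressed as the double
integral of the joint density over the event `g²·r^{−2α} < x`. -/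
theorem backcom_composite_cdf
    (m α Rl Ru : ℝ) (hm : 0 < m) (hα : 0 < α) (h0 : 0 < Rl) (hlu : Rl < Ru)
    (x : ℝ) (hx : 0 < x) :
    (∫ g in Set.Ioi (0 : ℝ), ∫ r in Rl..Ru,
        if g ^ 2 * r ^ (-(2 * α)) < x
        then m ^ m * g ^ (m - 1) * Real.exp (-m * g) / Real.Gamma m *
          (2 * r / (Ru ^ 2 - Rl ^ 2)) else 0) =
      1 - (Ru ^ 2 * uGamma m (m * Ru ^ α * Real.sqrt x)
          - Rl ^ 2 * uGamma m (m * Rl ^ α * Real.sqrt x)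
          + (m * Real.sqrt x) ^ (-(2 / α)) *
            gGamma (m + 2 / α) (m * Rl ^ α * Real.sqrt x) (m * Ru ^ α * Real.sqrt x)) /
        ((Ru ^ 2 - Rl ^ 2) * Real.Gamma m) := by
  have hs : 0 < Real.sqrt x := Real.sqrt_pos.2 hx
  have hRu : 0 < Ru := h0.trans hlu
  have hD : 0 < Ru ^ 2 - Rl ^ 2 := by nlinarith
  have hΓ : 0 < Real.Gamma m := Real.Gamma_pos_of_pos hm
  set s := Real.sqrt x with hsdef
  set Gl := Rl ^ α * s with hGldef
  set Gu := Ru ^ α * s with hGudef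
  have hGl0 : 0 < Gl := by positivity
  have hGu0 : 0 < Gu := by positivity
  have hGlu : Gl < Gu :=
    mul_lt_mul_of_pos_right (Real.rpow_lt_rpow h0.le hlu hα) hs
  -- threshold characterization
  have key_iff : ∀ u R : ℝ, 0 < R → 0 ≤ u → ((u / s) ^ α⁻¹ ≤ R ↔ u ≤ R ^ α * s) := by
    intro u R hR hu
    rw [← Real.rpow_le_rpow_iff (by positivity) hR.le hα,
      Real.rpow_inv_rpow (by positivity) hα.ne', div_le_iff₀ hs]
  have key_iff' : ∀ u R : ℝ, 0 < R → 0 ≤ u → (R < (u / s) ^ α⁻¹ ↔ R ^ α * s < u) := by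
    intro u R hR hu
    rw [← not_le, ← not_le, key_iff u R hR hu]
  have key_le : ∀ u R : ℝ, 0 < R → 0 ≤ u → (R ≤ (u / s) ^ α⁻¹ ↔ R ^ α * s ≤ u) := by
    intro u R hR hu
    rw [← Real.rpow_le_rpow_iff hR.le (by positivity) hα,
      Real.rpow_inv_rpow (by positivity) hα.ne', le_div_iff₀ hs]
  set F : ℝ → ℝ := fun g => m ^ m * g ^ (m - 1) * Real.exp (-m * g) / Real.Gamma m *
      (Ru ^ 2 - (max Rl (min ((g / s) ^ α⁻¹) Ru)) ^ 2) / (Ru ^ 2 - Rl ^ 2) with hF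
  have step1 : (∫ g in Set.Ioi (0 : ℝ), ∫ r in Rl..Ru,
        if g ^ 2 * r ^ (-(2 * α)) < x
        then m ^ m * g ^ (m - 1) * Real.exp (-m * g) / Real.Gamma m *
          (2 * r / (Ru ^ 2 - Rl ^ 2)) else 0) = ∫ g in Set.Ioi (0:ℝ), F g :=
    setIntegral_congr_fun measurableSet_Ioi
      (fun g hg => inner_eval α Rl Ru x _ g hα h0 hlu hx hg)
  -- integrability
  have hbase := base_int m m hm hm
  have hbase2 := base_int m (m + 2/α) hm (by positivity)
  have hFmeas : AEStronglyMeasurable F (volume.restrict (Set.Ioi 0)) := by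
    apply Measurable.aestronglyMeasurable
    rw [hF]
    fun_prop
  have hK : ∀ g : ℝ, 0 < g →
      0 ≤ m ^ m * g ^ (m - 1) * Real.exp (-m * g) / Real.Gamma m := by
    intro g hg; positivity
  have hw : ∀ g : ℝ, 0 ≤ Ru ^ 2 - (max Rl (min ((g / s) ^ α⁻¹) Ru)) ^ 2 ∧
      Ru ^ 2 - (max Rl (min ((g / s) ^ α⁻¹) Ru)) ^ 2 ≤ Ru ^ 2 - Rl ^ 2 := by
    intro g
    have hc1 : Rl ≤ max Rl (min ((g / s) ^ α⁻¹) Ru) := le_max_left _ _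
    have hc2 : max Rl (min ((g / s) ^ α⁻¹) Ru) ≤ Ru := max_le hlu.le (min_le_right _ _)
    constructor
    · nlinarith [h0.trans_le hc1]
    · nlinarith [h0.trans_le hc1]
  have hFint : IntegrableOn F (Set.Ioi 0) := by
    have hbound : IntegrableOn
        (fun g : ℝ => m ^ m / Real.Gamma m * (g ^ (m - 1) * Real.exp (-(m * g))))
        (Set.Ioi 0) := hbase.const_mul _
    refine Integrable.mono hbound hFmeas ?_
    filter_upwards [ae_restrict_mem measurableSet_Ioi] with g hg
    have hg0 : (0:ℝ) < g := hg
    have h1 := hK g hg0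
    have h2 := hw g
    rw [Real.norm_eq_abs, Real.norm_eq_abs]
    have hFg : 0 ≤ F g := by
      rw [hF]; dsimp only
      exact div_nonneg (mul_nonneg h1 h2.1) hD.le
    rw [abs_of_nonneg hFg, abs_of_nonneg (by positivity)]
    rw [hF]; dsimp only
    rw [div_le_iff₀ hD, neg_mul]
    have : m ^ m / Real.Gamma m * (g ^ (m - 1) * Real.exp (-(m * g)))
        = m ^ m * g ^ (m - 1) * Real.exp (-(m * g)) / Real.Gamma m := by ring
    rw [this]
    exact mul_le_mul_of_nonneg_left h2.2 (by rw [← neg_mul] at *; exact hK g hg0)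
  -- splitting
  have sub1 : Set.Ioc (0:ℝ) Gl ⊆ Set.Ioi 0 := fun t ht => ht.1
  have sub2 : Set.Ioc Gl Gu ⊆ Set.Ioi 0 := fun t ht => hGl0.trans ht.1
  have sub3 : Set.Ioc (0:ℝ) Gu ⊆ Set.Ioi 0 := fun t ht => ht.1
  have sub4 : Set.Ioi Gu ⊆ Set.Ioi 0 := Set.Ioi_subset_Ioi hGu0.le
  have hsplit : (∫ g in Set.Ioi (0:ℝ), F g)
      = ((∫ g in Set.Ioc 0 Gl, F g) + (∫ g in Set.Ioc Gl Gu, F g)) + (∫ g in Set.Ioi Gu, F g) := by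
    have h1 := setIntegral_union
      (Set.disjoint_left.2 fun t (ht : t ∈ Set.Ioc (0:ℝ) Gl) (ht' : t ∈ Set.Ioc Gl Gu) =>
        absurd ht.2 (not_le.2 ht'.1))
      measurableSet_Ioc (hFint.mono_set sub1) (hFint.mono_set sub2)
    rw [Set.Ioc_union_Ioc_eq_Ioc hGl0.le hGlu.le] at h1
    have h2 := setIntegral_union
      (Set.disjoint_left.2 fun t (ht : t ∈ Set.Ioc (0:ℝ) Gu) (ht' : t ∈ Set.Ioi Gu) =>
        absurd ht.2 (not_le.2 ht'))
      measurableSet_Ioi (hFint.mono_set sub3) (hFint.mono_set sub4)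
    rw [Set.Ioc_union_Ioi_eq_Ioi hGu0.le] at h2
    rw [h2, h1]
  -- piece 3
  have p3 : (∫ g in Set.Ioi Gu, F g) = 0 := by
    rw [setIntegral_congr_fun measurableSet_Ioi (g := fun _ => (0:ℝ)) ?_]
    · simp
    · intro g hg
      have hg0 : 0 < g := hGu0.trans hg
      have hRur0 : Ru < (g / s) ^ α⁻¹ := (key_iff' g Ru hRu hg0.le).2 hg
      rw [hF]; dsimp only
      rw [min_eq_right hRur0.le, max_eq_right hlu.le]
      ring
  -- piece 1
  have p1 : (∫ g in Set.Ioc (0:ℝ) Gl, F g)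
      = m ^ m / Real.Gamma m *
        (m ^ (-m) * (Real.Gamma m - uGamma m (m * Rl ^ α * s))) := by
    rw [setIntegral_congr_fun measurableSet_Ioc
      (g := fun g => m ^ m / Real.Gamma m * (g ^ (m - 1) * Real.exp (-(m * g)))) ?_]
    · rw [MeasureTheory.integral_const_mul, ← intervalIntegral.integral_of_le hGl0.le,
        subst_mul m m 0 Gl hm le_rfl hGl0.le, mul_zero,
        ← uGamma_sub m 0 (m * Gl) hm le_rfl (by positivity), uGamma_zero m hm]
      simp only [hGldef, ← mul_assoc]
    · intro g hg
      have hg0 : 0 < g := hg.1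
      have hr0 : (g / s) ^ α⁻¹ ≤ Rl := (key_iff g Rl h0 hg0.le).2 hg.2
      rw [hF]; dsimp only
      rw [min_eq_left (hr0.trans hlu.le), max_eq_left hr0, neg_mul]
      field_simp
  -- piece 2
  have p2 : (∫ g in Set.Ioc Gl Gu, F g)
      = m ^ m / Real.Gamma m / (Ru ^ 2 - Rl ^ 2) * Ru ^ 2 *
          (m ^ (-m) * (uGamma m (m * Rl ^ α * s) - uGamma m (m * Ru ^ α * s)))
        - m ^ m / Real.Gamma m / (Ru ^ 2 - Rl ^ 2) * s ^ (-(2/α)) *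
          (m ^ (-(m + 2/α)) *
            gGamma (m + 2/α) (m * Rl ^ α * s) (m * Ru ^ α * s)) := by
    rw [← intervalIntegral.integral_of_le hGlu.le]
    rw [intervalIntegral.integral_congr
      (g := fun g => m ^ m / Real.Gamma m / (Ru ^ 2 - Rl ^ 2) * Ru ^ 2 *
          (g ^ (m - 1) * Real.exp (-(m * g)))
        - m ^ m / Real.Gamma m / (Ru ^ 2 - Rl ^ 2) * s ^ (-(2/α)) *
          (g ^ ((m + 2/α) - 1) * Real.exp (-(m * g)))) ?_]
    · have i1 : IntervalIntegrable
          (fun g : ℝ => m ^ m / Real.Gamma m / (Ru ^ 2 - Rl ^ 2) * Ru ^ 2 *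
            (g ^ (m - 1) * Real.exp (-(m * g)))) volume Gl Gu := by
        rw [intervalIntegrable_iff_integrableOn_Ioc_of_le hGlu.le]
        exact (hbase.mono_set sub2).const_mul _
      have i2 : IntervalIntegrable
          (fun g : ℝ => m ^ m / Real.Gamma m / (Ru ^ 2 - Rl ^ 2) * s ^ (-(2/α)) *
            (g ^ ((m + 2/α) - 1) * Real.exp (-(m * g)))) volume Gl Gu := by
        rw [intervalIntegrable_iff_integrableOn_Ioc_of_le hGlu.le]
        exact (hbase2.mono_set sub2).const_mul _
      rw [intervalIntegral.integral_sub i1 i2,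
        intervalIntegral.integral_const_mul, intervalIntegral.integral_const_mul,
        subst_mul m m Gl Gu hm hGl0.le hGlu.le,
        subst_mul m (m + 2/α) Gl Gu hm hGl0.le hGlu.le,
        ← uGamma_sub m (m * Gl) (m * Gu) hm (by positivity) (by nlinarith)]
      simp only [hGldef, hGudef, ← mul_assoc]
      rw [gGamma]
    · intro g hg
      rw [Set.uIcc_of_le hGlu.le] at hg
      have hg0 : 0 < g := hGl0.trans_le hg.1
      have hr0l : Rl ≤ (g / s) ^ α⁻¹ := (key_le g Rl h0 hg0.le).2 hg.1
      have hr0u : (g / s) ^ α⁻¹ ≤ Ru := (key_iff g Ru hRu hg0.le).2 hg.2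
      rw [hF]; dsimp only
      rw [min_eq_left hr0u, max_eq_right hr0l]
      have hsq : ((g / s) ^ α⁻¹) ^ (2:ℕ) = g ^ (2/α) * s ^ (-(2/α)) := by
        rw [← Real.rpow_natCast ((g / s) ^ α⁻¹) 2, ← Real.rpow_mul (by positivity),
          show α⁻¹ * ((2:ℕ):ℝ) = 2/α by push_cast; ring,
          Real.div_rpow hg0.le hs.le, Real.rpow_neg hs.le, div_eq_mul_inv]
      have hadd : g ^ ((m + 2/α) - 1) = g ^ (m - 1) * g ^ (2/α) := by
        rw [← Real.rpow_add hg0]; ring_nf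
      rw [hsq, neg_mul, hadd]
      ring
  -- final algebra
  rw [step1, hsplit, p1, p2, p3, add_zero]
  have hmm : (0:ℝ) < m ^ m := Real.rpow_pos_of_pos hm m
  have hm2 : (0:ℝ) < m ^ (2/α) := Real.rpow_pos_of_pos hm _
  have hs2 : (0:ℝ) < s ^ (2/α) := Real.rpow_pos_of_pos hs _
  simp only [Real.mul_rpow hm.le hs.le, Real.rpow_neg hm.le, Real.rpow_neg hs.le,
    Real.rpow_add hm]
  field_simp
  ring
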